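/- Let p, q, r be pairwise relatively prime positive integers with p < q < r, p odd and p ≥ 3, satisfying pq + pr − qr = 1, and define f(x,y) = −(q+r)x² + 4qxy − 4(q−p)y² − 4y, Δ(y) = 4(2y − (q+r))² − 16(q+r)(p−1), and the lattice 𝔏 = {(a,m) ∈ ℤ² : −p ≤ a ≤ p, a ≡ p (mod 2), 0 ≤ m ≤ (p−1)/2}. Then a point (a,m) ∈ 𝔏 satisfies f(a,m) ≥ f(1,1) if and only if either (a,m) = (1,1), or all of the following hold: m ≥ 2, Δ(m) ≥ 0, and |a − 2qm/(q+r)| ≤ √(Δ(m)) / (2(q+r)). -/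

import Mathlib

/-!
Completing the square in `x`: thanks to `pq + pr − qr = 1`,
`Δ(y) − (2(q+r)x − 4qy)² = 4(q+r)(f(x,y) − f(1,1))`, so `f(a,m) ≥ f(1,1)` says exactly that
`a` lies in the interval of the statement. The extra condition `m ≥ 2` comes from the rows
`m = 0` and `m = 1`, where `a` is odd and `f(1,1) − f(a,0) = (q+r)(a² − 1) + 4(p − 1)` and
`f(1,1) − f(a,1) = (a − 1)((q+r)(a+1) − 4q)` are positive unless `(a,m) = (1,1)`.
-/

/-- The integer-valued quadratic `f(x,y) = −(q+r)x² + 4qxy − 4(q−p)y² − 4y`. -/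
def fZ (p q r a m : ℤ) : ℤ :=
  -(q + r) * a ^ 2 + 4 * q * a * m - 4 * (q - p) * m ^ 2 - 4 * m

/-- The discriminant `Δ(y) = 4(2y − (q+r))² − 16(q+r)(p−1)` as a real function. -/
noncomputable def ΔR (p q r : ℕ) (y : ℝ) : ℝ :=
  4 * (2 * y - ((q : ℝ) + r)) ^ 2 - 16 * ((q : ℝ) + r) * ((p : ℝ) - 1)

/-- The lattice `𝔏 = {(a,m) ∈ ℤ² : −p ≤ a ≤ p, a ≡ p (mod 2), 0 ≤ m ≤ (p−1)/2}`. -/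
def latt (p : ℤ) : Set (ℤ × ℤ) :=
  {am | -p ≤ am.1 ∧ am.1 ≤ p ∧ am.1 % 2 = p % 2 ∧ 0 ≤ am.2 ∧ am.2 ≤ (p - 1) / 2}

lemma sq_mul_le_iff_abs_le_sqrt_div {t u D : ℝ} (ht : 0 < t) :
    (t * u) ^ 2 ≤ D ↔ 0 ≤ D ∧ |u| ≤ √D / t := by
  have habs : |u| * t = |t * u| := by rw [abs_mul, abs_of_pos ht, mul_comm]
  rw [le_div_iff₀ ht, habs]
  constructor
  · intro h
    exact ⟨(sq_nonneg _).trans h, Real.abs_le_sqrt h⟩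
  · rintro ⟨hD, h⟩
    rwa [Real.le_sqrt (abs_nonneg _) hD, sq_abs] at h

section Rows

variable {p q r a : ℤ}

lemma fZ_one_one_sub_fZ_zero :
    fZ p q r 1 1 - fZ p q r a 0 = (q + r) * (a ^ 2 - 1) + 4 * (p - 1) := by
  simp only [fZ]; ring

lemma fZ_one_one_sub_fZ_one :
    fZ p q r 1 1 - fZ p q r a 1 = (a - 1) * ((q + r) * (a + 1) - 4 * q) := by
  simp only [fZ]; ring

lemma fZ_zero_lt_fZ_one_one (hp : 1 < p) (hqr : 0 ≤ q + r) (ha : Odd a) :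
    fZ p q r a 0 < fZ p q r 1 1 := by
  have ha0 : a ≠ 0 := by rintro rfl; exact Int.not_odd_zero ha
  have ha2 : 1 ≤ a ^ 2 := by nlinarith [Int.one_le_abs ha0, sq_abs a]
  rw [← sub_pos, fZ_one_one_sub_fZ_zero]
  nlinarith [mul_nonneg hqr (sub_nonneg.2 ha2)]

lemma fZ_one_lt_fZ_one_one (hq : 0 < q) (hr : 0 < r) (ha : Odd a) (ha1 : a ≠ 1) :
    fZ p q r a 1 < fZ p q r 1 1 := by
  rw [← sub_pos, fZ_one_one_sub_fZ_one]
  have hmod := Int.odd_iff.1 ha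
  rcases (by omega : 3 ≤ a ∨ a ≤ -1) with hge | hle
  · exact mul_pos (by omega) (by nlinarith)
  · exact mul_pos_of_neg_of_neg (by omega) (by nlinarith)

lemma two_le_of_fZ_one_one_le {m : ℤ} (hp : 1 < p) (hq : 0 < q) (hr : 0 < r) (ha : Odd a)
    (hm : 0 ≤ m) (hne : ¬(a = 1 ∧ m = 1)) (h : fZ p q r 1 1 ≤ fZ p q r a m) : 2 ≤ m := by
  by_contra! hm2
  obtain rfl | rfl : m = 0 ∨ m = 1 := by omega
  · exact (fZ_zero_lt_fZ_one_one hp (by omega) ha).not_ge h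
  · exact (fZ_one_lt_fZ_one_one hq hr ha (by tauto)).not_ge h

end Rows

section CompletedSquare

variable {p q r : ℕ}

lemma ΔR_sub_sq_eq (heq : (p : ℤ) * q + (p : ℤ) * r - (q : ℤ) * r = 1) (a m : ℤ) :
    ΔR p q r m - (2 * (q + r) * a - 4 * q * m) ^ 2 =
      4 * (q + r) * ((fZ p q r a m : ℝ) - fZ p q r 1 1) := by
  have heq : (p : ℝ) * q + (p : ℝ) * r - (q : ℝ) * r = 1 := by exact_mod_cast heq
  simp only [fZ, ΔR]
  push_cast
  linear_combination (-16 * (m : ℝ) ^ 2) * heq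

lemma fZ_one_one_le_iff (heq : (p : ℤ) * q + (p : ℤ) * r - (q : ℤ) * r = 1)
    (hqr : 0 < q + r) (a m : ℤ) :
    fZ p q r 1 1 ≤ fZ p q r a m ↔
      0 ≤ ΔR p q r m ∧
        |(a : ℝ) - 2 * q * m / ((q : ℝ) + r)| ≤ √(ΔR p q r m) / (2 * ((q : ℝ) + r)) := by
  have hs : (0 : ℝ) < q + r := by exact_mod_cast hqr
  have hsq : 2 * ((q : ℝ) + r) * (a - 2 * q * m / (q + r)) = 2 * (q + r) * a - 4 * q * m := by
    field_simp; ring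
  rw [← sq_mul_le_iff_abs_le_sqrt_div (by positivity), hsq, ← sub_nonneg (b := _ ^ 2),
    ΔR_sub_sq_eq heq, mul_nonneg_iff_of_pos_left (by positivity), sub_nonneg]
  exact Int.cast_le.symm

end CompletedSquare

theorem stmt_14_general (p q r : ℕ) (hp : 3 ≤ p) (hodd : Odd p) (hpq : p < q) (hqr : q < r)
    (heq : (p : ℤ) * q + (p : ℤ) * r - (q : ℤ) * r = 1) :
    ∀ am : ℤ × ℤ, am ∈ latt p →
      (fZ p q r am.1 am.2 ≥ fZ p q r 1 1 ↔
        (am = (1, 1) ∨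
          (2 ≤ am.2 ∧ 0 ≤ ΔR p q r (am.2 : ℝ) ∧
            |(am.1 : ℝ) - 2 * q * (am.2 : ℝ) / ((q : ℝ) + r)| ≤
              Real.sqrt (ΔR p q r (am.2 : ℝ)) / (2 * ((q : ℝ) + r))))) := by
  rintro ⟨a, m⟩ ⟨-, -, hpar, hm, -⟩
  have ha : Odd a := by
    rw [Int.odd_iff, hpar, ← Int.odd_iff]
    exact_mod_cast hodd
  have key := fZ_one_one_le_iff heq (by omega) a m
  simp only [Prod.mk.injEq]
  constructor
  · intro h
    refine or_iff_not_imp_left.2 fun hne => ⟨?_, key.1 h⟩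
    exact two_le_of_fZ_one_one_le (by omega) (by omega) (by omega) ha hm hne h
  · rintro (⟨rfl, rfl⟩ | ⟨-, h⟩)
    · exact le_rfl
    · exact key.2 h

/-- Let `p, q, r` be pairwise relatively prime positive integers with
`p < q < r`, `p` odd, `p ≥ 3`, and `pq + pr − qr = 1`. A point `(a,m) ∈ 𝔏` satisfies
`f(a,m) ≥ f(1,1)` if and only if either `(a,m) = (1,1)`, or `m ≥ 2`, `Δ(m) ≥ 0`, and
`|a − 2qm/(q+r)| ≤ √(Δ(m))/(2(q+r))`. -/
theorem stmt_14 (p q r : ℕ) (hp : 3 ≤ p) (hodd : Odd p) (hpq : p < q) (hqr : q < r)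
    (hcopq : Nat.Coprime p q) (hcopr : Nat.Coprime p r) (hcoqr : Nat.Coprime q r)
    (heq : (p : ℤ) * q + (p : ℤ) * r - (q : ℤ) * r = 1) :
    ∀ am : ℤ × ℤ, am ∈ latt p →
      (fZ p q r am.1 am.2 ≥ fZ p q r 1 1 ↔
        (am = (1, 1) ∨
          (2 ≤ am.2 ∧ 0 ≤ ΔR p q r (am.2 : ℝ) ∧
            |(am.1 : ℝ) - 2 * q * (am.2 : ℝ) / ((q : ℝ) + r)| ≤
              Real.sqrt (ΔR p q r (am.2 : ℝ)) / (2 * ((q : ℝ) + r))))) :=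
  stmt_14_general p q r hp hodd hpq hqr heq
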